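/- arXiv:2108.10176 — 2 statements merged into one kernel-verified Lean document; each statement's English description precedes it below -/
import Mathlib

section
/- Let d ≥ 1, let A, B be real d×d matrices with b_k ∈ ℝ^d the k-th column of B, let λ₀ ∈ ℝ^d, and for each k ∈ {1,…,d} and each λ ∈ ℝ^d let ν_k(λ) be a probability measure on ℝ with finite first and second moments J_k(λ) = ∫ x ν_k(λ,dx) and J_k²(λ) = ∫ x² ν_k(λ,dx). Let f(λ) = ‖λ‖₂²/2 = (λᵀλ)/2, let J(λ) be the diagonal matrix with entries J_k(λ), set M(λ) := A + B·J(λ), and let w(λ) ∈ ℝ^d have components w_k(λ) = (‖b_k‖₂²/2)·J_k²(λ). Define (𝒜f)(λ) := ⟨A·(λ − λ₀), λ⟩ + Σ_{k=1}^d λ_k · ∫ (f(λ + x·b_k) − f(λ)) ν_k(λ, dx). Then for every λ ∈ ℝ^d, (𝒜f)(λ) = λᵀ·M(λ)·λ + λᵀ·(w(λ) − A·λ₀). -/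
open Matrix MeasureTheory

/-- The extended generator of the linear intensity model applied to
`f(λ) = ‖λ‖₂²/2 = λᵀλ/2`: with `M(λ) = A + B J(λ)` and
`w_k(λ) = (‖b_k‖₂²/2) J_k²(λ)`, one has
`(𝒜 f)(λ) = λᵀ M(λ) λ + λᵀ (w(λ) − A λ₀)`. -/
theorem stmt_14 {d : ℕ} (hd : 1 ≤ d) (A B : Matrix (Fin d) (Fin d) ℝ)
    (lam₀ : Fin d → ℝ)
    (ν : Fin d → (Fin d → ℝ) → Measure ℝ)
    (hprob : ∀ k lam, IsProbabilityMeasure (ν k lam))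
    (hint1 : ∀ k lam, Integrable (fun x : ℝ => x) (ν k lam))
    (hint2 : ∀ k lam, Integrable (fun x : ℝ => x ^ 2) (ν k lam))
    (J J2 : (Fin d → ℝ) → Fin d → ℝ)
    (hJ : ∀ lam k, J lam k = ∫ x, x ∂(ν k lam))
    (hJ2 : ∀ lam k, J2 lam k = ∫ x, x ^ 2 ∂(ν k lam))
    (f : (Fin d → ℝ) → ℝ) (hf : ∀ lam : Fin d → ℝ, f lam = (lam ⬝ᵥ lam) / 2)
    (Mf : (Fin d → ℝ) → Matrix (Fin d) (Fin d) ℝ)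
    (hM : ∀ lam, Mf lam = A + B * Matrix.diagonal (J lam))
    (w : (Fin d → ℝ) → Fin d → ℝ)
    (hw : ∀ lam k, w lam k =
      (((fun i => B i k) ⬝ᵥ (fun i => B i k)) / 2) * J2 lam k)
    (Af : (Fin d → ℝ) → ℝ)
    (hAf : ∀ lam : Fin d → ℝ, Af lam = (A *ᵥ (lam - lam₀)) ⬝ᵥ lam +
      ∑ k, lam k * ∫ x, (f (lam + x • (fun i => B i k)) - f lam) ∂(ν k lam)) :
    ∀ lam : Fin d → ℝ,
      Af lam = lam ⬝ᵥ (Mf lam *ᵥ lam) + lam ⬝ᵥ (w lam - A *ᵥ lam₀) := by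
  intro lam
  have hint : ∀ k : Fin d,
      (∫ x, (f (lam + x • (fun i => B i k)) - f lam) ∂(ν k lam)) =
      ((fun i => B i k) ⬝ᵥ lam) * J lam k
        + ((fun i => B i k) ⬝ᵥ (fun i => B i k)) / 2 * J2 lam k := by
    intro k
    set b : Fin d → ℝ := fun i => B i k with hb
    have heq : ∀ x : ℝ, f (lam + x • b) - f lam
        = (b ⬝ᵥ lam) * x + (b ⬝ᵥ b) / 2 * x ^ 2 := by
      intro x
      rw [hf, hf]
      simp only [dotProduct_add, add_dotProduct, dotProduct_smul,
        smul_dotProduct, smul_eq_mul, dotProduct_comm b lam]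
      ring
    rw [integral_congr_ae (Filter.Eventually.of_forall heq),
      integral_add ((hint1 k lam).const_mul _) ((hint2 k lam).const_mul _),
      integral_const_mul, integral_const_mul, hJ, hJ2]
  rw [hAf, hM]
  simp only [hint]
  simp only [mulVec, dotProduct, Matrix.mul_apply, Matrix.add_apply,
    Matrix.diagonal_apply, Pi.sub_apply, hw, Finset.mul_sum, Finset.sum_mul,
    mul_ite, mul_zero, ite_mul, zero_mul, Finset.sum_ite_eq, Finset.mem_univ,
    if_true, mul_sub, Finset.sum_sub_distrib, mul_add, Finset.sum_add_distrib,
    Finset.sum_ite_eq', sub_mul, add_mul, Finset.sum_mul]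
  have k1 : (∑ x, ∑ i, lam x * (B i x * lam i * J lam x))
      = ∑ x, ∑ i, lam x * (B x i * J lam i * lam i) := by
    rw [Finset.sum_comm]
    exact Finset.sum_congr rfl fun i _ => Finset.sum_congr rfl fun x _ => by ring
  have k2 : (∑ x, ∑ i, A x i * lam i * lam x)
      = ∑ x, ∑ i, lam x * (A x i * lam i) :=
    Finset.sum_congr rfl fun x _ => Finset.sum_congr rfl fun i _ => by ring
  have k3 : (∑ x, ∑ i, A x i * lam₀ i * lam x)
      = ∑ x, ∑ i, lam x * (A x i * lam₀ i) :=
    Finset.sum_congr rfl fun x _ => Finset.sum_congr rfl fun i _ => by ring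
  rw [k1, k2, k3]
  ring
end

section
/- Let d ≥ 1, let A, B be real d×d matrices with b_k the k-th column of B, λ₀ ∈ ℝ^d, and for each k and λ let ν_k(λ) be a probability measure on ℝ with first moment J_k(λ) and second moment J_k²(λ). Assume: (i) there is K > 0 with |J_k(λ)| ≤ K and 0 ≤ J_k²(λ) ≤ K for all k and λ; (ii) there is γ < 0 such that for every λ ∈ ℝ^d, every eigenvalue of the symmetric matrix M(λ) + M(λ)ᵀ is at most γ, where M(λ) = A + B·J(λ) and J(λ) is the diagonal matrix with entries J_k(λ). Let f(λ) = λᵀλ/2, let w(λ) ∈ ℝ^d have components w_k(λ) = (‖b_k‖₂²/2)·J_k²(λ), and set (𝒜f)(λ) := λᵀ·M(λ)·λ + λᵀ·(w(λ) − A·λ₀). Then there exist constants C₁ > 0 and C₂ ∈ ℝ such that (𝒜f)(λ) ≤ C₂ − C₁·f(λ) for all λ ∈ ℝ^d. -/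
/-!
The quadratic part `λᵀ M λ = ½ λᵀ (M + Mᵀ) λ` is at most `(γ/2)|λ|²` by the eigenvalue bound,
while `w(λ) - A λ₀` is bounded uniformly in `λ` by the bound on the second moments. Young's
inequality `⟨λ, v⟩ ≤ ε|λ|² + |v|²/(4ε)` with `ε = -γ/4` absorbs the linear term into half of the
quadratic decay, leaving `C₁ = -γ/2`.
-/

open Matrix MeasureTheory

theorem Matrix.IsHermitian.dotProduct_mulVec_le_of_eigenvalues_le {n : Type*} [Fintype n]
    [DecidableEq n] {S : Matrix n n ℝ} (hS : S.IsHermitian) {γ : ℝ} (hγ : ∀ i, hS.eigenvalues i ≤ γ)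
    (x : n → ℝ) : x ⬝ᵥ (S *ᵥ x) ≤ γ * (x ⬝ᵥ x) := by
  have hpsd : (algebraMap ℝ _ γ - S).PosSemidef := by
    rw [posSemidef_iff_isHermitian_and_spectrum_nonneg, ← spectrum.singleton_sub_eq,
      hS.spectrum_real_eq_range_eigenvalues]
    refine ⟨(isHermitian_diagonal _).sub hS, ?_⟩
    rintro _ ⟨_, rfl, _, ⟨i, rfl⟩, rfl⟩
    simpa using hγ i
  simpa [Algebra.algebraMap_eq_smul_one, sub_mulVec, smul_mulVec, dotProduct_sub] using
    hpsd.re_dotProduct_nonneg x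

theorem Matrix.dotProduct_add_transpose_mulVec {n R : Type*} [Fintype n] [CommRing R]
    (M : Matrix n n R) (x : n → R) : x ⬝ᵥ ((M + Mᵀ) *ᵥ x) = 2 * (x ⬝ᵥ (M *ᵥ x)) := by
  rw [add_mulVec, dotProduct_add, mulVec_transpose, dotProduct_comm x (_ ᵥ* M),
    ← dotProduct_mulVec, two_mul]

theorem Matrix.dotProduct_le_mul_add_div {n : Type*} [Fintype n] {ε : ℝ} (hε : 0 < ε)
    (x y : n → ℝ) : x ⬝ᵥ y ≤ ε * (x ⬝ᵥ x) + (y ⬝ᵥ y) / (4 * ε) := by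
  simp only [dotProduct, Finset.mul_sum, Finset.sum_div, ← Finset.sum_add_distrib]
  refine Finset.sum_le_sum fun i _ => ?_
  have key : ε * (x i * x i) + y i * y i / (4 * ε) - x i * y i =
      (2 * ε * x i - y i) ^ 2 / (4 * ε) := by
    field_simp
    ring
  linarith [show 0 ≤ (2 * ε * x i - y i) ^ 2 / (4 * ε) by positivity]

theorem Matrix.dotProduct_self_le_sum_sq {n : Type*} [Fintype n] {v c : n → ℝ}
    (h : ∀ i, |v i| ≤ c i) : v ⬝ᵥ v ≤ ∑ i, c i ^ 2 :=
  Finset.sum_le_sum fun i _ => by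
    rw [← sq]; exact sq_le_sq.mpr ((h i).trans (le_abs_self _))

theorem stmt_15_general {d : ℕ} (A B : Matrix (Fin d) (Fin d) ℝ)
    (lam₀ : Fin d → ℝ)
    (J2 : (Fin d → ℝ) → Fin d → ℝ)
    (K : ℝ)
    (hJ2bd : ∀ lam k, 0 ≤ J2 lam k ∧ J2 lam k ≤ K)
    (Mf : (Fin d → ℝ) → Matrix (Fin d) (Fin d) ℝ)
    (γ : ℝ) (hγneg : γ < 0)
    (hH : ∀ lam : Fin d → ℝ, (Mf lam + (Mf lam)ᵀ).IsHermitian)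
    (hγ : ∀ (lam : Fin d → ℝ) (i : Fin d), (hH lam).eigenvalues i ≤ γ)
    (f : (Fin d → ℝ) → ℝ) (hf : ∀ lam : Fin d → ℝ, f lam = (lam ⬝ᵥ lam) / 2)
    (w : (Fin d → ℝ) → Fin d → ℝ)
    (hw : ∀ lam k, w lam k =
      (((fun i => B i k) ⬝ᵥ (fun i => B i k)) / 2) * J2 lam k)
    (Af : (Fin d → ℝ) → ℝ)
    (hAf : ∀ lam : Fin d → ℝ,
      Af lam = lam ⬝ᵥ (Mf lam *ᵥ lam) + lam ⬝ᵥ (w lam - A *ᵥ lam₀)) :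
    ∃ C₁ : ℝ, 0 < C₁ ∧ ∃ C₂ : ℝ, ∀ lam : Fin d → ℝ, Af lam ≤ C₂ - C₁ * f lam := by
  set D := ∑ k, (((fun i => B i k) ⬝ᵥ (fun i => B i k)) / 2 * K + |(A *ᵥ lam₀) k|) ^ 2
  refine ⟨-γ / 2, by linarith, D / -γ, fun lam => ?_⟩
  have hquad : lam ⬝ᵥ (Mf lam *ᵥ lam) ≤ γ / 2 * (lam ⬝ᵥ lam) := by
    have := (hH lam).dotProduct_mulVec_le_of_eigenvalues_le (hγ lam) lam
    rw [dotProduct_add_transpose_mulVec] at this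
    linarith
  have hbounded : (w lam - A *ᵥ lam₀) ⬝ᵥ (w lam - A *ᵥ lam₀) ≤ D := by
    refine dotProduct_self_le_sum_sq fun k => (abs_sub _ _).trans (add_le_add_left ?_ _)
    have hb : 0 ≤ ((fun i => B i k) ⬝ᵥ (fun i => B i k)) / 2 :=
      div_nonneg (Finset.sum_nonneg fun i _ => mul_self_nonneg _) zero_le_two
    rw [hw, abs_of_nonneg (mul_nonneg hb (hJ2bd lam k).1)]
    exact mul_le_mul_of_nonneg_left (hJ2bd lam k).2 hb
  have hyoung := dotProduct_le_mul_add_div (ε := -γ / 4) (by linarith) lam (w lam - A *ᵥ lam₀)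
  have hconst : (w lam - A *ᵥ lam₀) ⬝ᵥ (w lam - A *ᵥ lam₀) / (4 * (-γ / 4)) ≤ D / -γ := by
    rw [mul_div_cancel₀ _ four_ne_zero]
    exact div_le_div_of_nonneg_right hbounded (by linarith)
  rw [hAf, hf]
  linarith

/-- Foster–Lyapunov drift condition for the linear intensity model: if the jump-size
first and second moments are uniformly bounded and every eigenvalue of
`M(λ) + M(λ)ᵀ` (with `M(λ) = A + B J(λ)`) is at most some `γ < 0`, then the closed
form of the generator applied to `f(λ) = λᵀλ/2`,
`(𝒜 f)(λ) = λᵀ M(λ) λ + λᵀ (w(λ) − A λ₀)`, satisfies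
`(𝒜 f)(λ) ≤ C₂ − C₁ f(λ)` for some constants `C₁ > 0`, `C₂ ∈ ℝ`. -/
theorem stmt_15 {d : ℕ} (hd : 1 ≤ d) (A B : Matrix (Fin d) (Fin d) ℝ)
    (lam₀ : Fin d → ℝ)
    (ν : Fin d → (Fin d → ℝ) → Measure ℝ)
    (hprob : ∀ k lam, IsProbabilityMeasure (ν k lam))
    (hint1 : ∀ k lam, Integrable (fun x : ℝ => x) (ν k lam))
    (hint2 : ∀ k lam, Integrable (fun x : ℝ => x ^ 2) (ν k lam))
    (J J2 : (Fin d → ℝ) → Fin d → ℝ)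
    (hJ : ∀ lam k, J lam k = ∫ x, x ∂(ν k lam))
    (hJ2 : ∀ lam k, J2 lam k = ∫ x, x ^ 2 ∂(ν k lam))
    (K : ℝ) (hK : 0 < K)
    (hJbd : ∀ lam k, |J lam k| ≤ K)
    (hJ2bd : ∀ lam k, 0 ≤ J2 lam k ∧ J2 lam k ≤ K)
    (Mf : (Fin d → ℝ) → Matrix (Fin d) (Fin d) ℝ)
    (hM : ∀ lam, Mf lam = A + B * Matrix.diagonal (J lam))
    (γ : ℝ) (hγneg : γ < 0)
    (hH : ∀ lam : Fin d → ℝ, (Mf lam + (Mf lam)ᵀ).IsHermitian)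
    (hγ : ∀ (lam : Fin d → ℝ) (i : Fin d), (hH lam).eigenvalues i ≤ γ)
    (f : (Fin d → ℝ) → ℝ) (hf : ∀ lam : Fin d → ℝ, f lam = (lam ⬝ᵥ lam) / 2)
    (w : (Fin d → ℝ) → Fin d → ℝ)
    (hw : ∀ lam k, w lam k =
      (((fun i => B i k) ⬝ᵥ (fun i => B i k)) / 2) * J2 lam k)
    (Af : (Fin d → ℝ) → ℝ)
    (hAf : ∀ lam : Fin d → ℝ,
      Af lam = lam ⬝ᵥ (Mf lam *ᵥ lam) + lam ⬝ᵥ (w lam - A *ᵥ lam₀)) :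
    ∃ C₁ : ℝ, 0 < C₁ ∧ ∃ C₂ : ℝ, ∀ lam : Fin d → ℝ, Af lam ≤ C₂ - C₁ * f lam :=
  stmt_15_general A B lam₀ J2 K hJ2bd Mf γ hγneg hH hγ f hf w hw Af hAf
end
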